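/- arXiv:1910.00220 — 3 statements merged into one kernel-verified Lean document; each statement's English description precedes it below -/
import Mathlib

section
/- A point x in the unit simplex S is an inertial Nash equilibrium if and only if it solves the variational inequality VI(S, F), i.e., F(x)^T (y - x) >= 0 for all y in S, where F_i(x) = max_j (u_j(x) - u_i(x) - c_{ij}). -/
/-!
The regrets `F i x` are nonnegative (take `j = i`), and some regret vanishes: a pure strategy
maximizing `u · x` cannot gain by switching since costs are nonnegative. Hence the minimum of the
linear form `y ↦ ∑ F i x * y i` over the simplex is `0`, attained at a vertex, so `x` solves the
VI iff `∑ F i x * x i ≤ 0`. As all terms are nonnegative, this says `F i x = 0` whenever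
`x i > 0`, which is the equilibrium condition.
-/

open Finset

section Simplex

variable {ι : Type*} [Fintype ι]

theorem sum_mul_nonpos_iff_of_nonneg {f x : ι → ℝ} (hf : ∀ i, 0 ≤ f i) (hx : ∀ i, 0 ≤ x i) :
    ∑ i, f i * x i ≤ 0 ↔ ∀ i, 0 < x i → f i ≤ 0 := by
  have hfx : ∀ i ∈ univ, 0 ≤ f i * x i := fun i _ => mul_nonneg (hf i) (hx i)
  rw [(sum_nonneg hfx).ge_iff_eq, eq_comm, sum_eq_zero_iff_of_nonneg hfx]
  refine forall_congr' fun i => ⟨fun h hxi => ?_, fun h => ?_⟩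
  · exact ((mul_eq_zero.1 (h (mem_univ i))).resolve_right hxi.ne').le
  · rcases (hx i).eq_or_lt with hxi | hxi
    · simp [← hxi]
    · simp [le_antisymm (h hxi) (hf i)]

theorem forall_simplex_sum_mul_sub_nonneg_iff [DecidableEq ι] {f : ι → ℝ} {k : ι}
    (hf : ∀ i, 0 ≤ f i) (hk : f k = 0) (x : ι → ℝ) :
    (∀ y : ι → ℝ, (∀ i, 0 ≤ y i) → ∑ i, y i = 1 → 0 ≤ ∑ i, f i * (y i - x i)) ↔
      ∑ i, f i * x i ≤ 0 := by
  simp only [mul_sub, sum_sub_distrib, sub_nonneg]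
  refine ⟨fun h => ?_, fun h y hy _ => h.trans (sum_nonneg fun i _ => mul_nonneg (hf i) (hy i))⟩
  have hδ : ∀ i, 0 ≤ (Pi.single k 1 : ι → ℝ) i := fun i => by
    by_cases hi : i = k <;> simp [hi]
  simpa [Pi.single_apply, hk] using h (Pi.single k 1) hδ (by simp)

end Simplex

section Regret

variable {ι : Type*} [Fintype ι] [Nonempty ι]

noncomputable def regret (v : ι → ℝ) (c : ι → ι → ℝ) (i : ι) : ℝ :=
  univ.sup' univ_nonempty fun j => v j - v i - c i j

variable {v : ι → ℝ} {c : ι → ι → ℝ}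

theorem regret_nonneg {i : ι} (hci : c i i = 0) : 0 ≤ regret v c i :=
  le_sup'_of_le _ (mem_univ i) (by simp [hci])

theorem regret_nonpos_iff {i : ι} : regret v c i ≤ 0 ↔ ∀ j, v j - c i j ≤ v i := by
  simp only [regret, sup'_le_iff, mem_univ, true_imp_iff, sub_right_comm _ (v i), sub_nonpos]

theorem exists_regret_eq_zero (hc : ∀ i j, 0 ≤ c i j) (hcd : ∀ i, c i i = 0) :
    ∃ k, regret v c k = 0 := by
  obtain ⟨k, hk⟩ := Finite.exists_max v
  refine ⟨k, le_antisymm (regret_nonpos_iff.2 fun j => ?_) (regret_nonneg (hcd k))⟩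
  linarith [hk j, hc k j]

end Regret

theorem inertial_iff_VI_general (n : ℕ) (hn : 0 < n)
    (u : Fin n → (Fin n → ℝ) → ℝ)
    (c : Fin n → Fin n → ℝ) (hc : ∀ i j, 0 ≤ c i j) (hcd : ∀ i, c i i = 0)
    (F : Fin n → (Fin n → ℝ) → ℝ)
    (hF : ∀ i x, F i x = (Finset.univ.sup' ⟨⟨0, hn⟩, Finset.mem_univ _⟩
        fun j => u j x - u i x - c i j))
    (x : Fin n → ℝ) (hx_nonneg : ∀ i, 0 ≤ x i) :
    (∀ i j, 0 < x i → u j x - c i j ≤ u i x) ↔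
      (∀ y : Fin n → ℝ, (∀ i, 0 ≤ y i) → (∑ i, y i = 1) →
        0 ≤ ∑ i, F i x * (y i - x i)) := by
  have : Nonempty (Fin n) := ⟨⟨0, hn⟩⟩
  have hFx : ∀ i, F i x = regret (u · x) c i := fun i => hF i x
  obtain ⟨k, hk⟩ := exists_regret_eq_zero (v := (u · x)) hc hcd
  have hF_nonneg : ∀ i, 0 ≤ F i x := fun i => (hFx i).symm ▸ regret_nonneg (hcd i)
  rw [forall_simplex_sum_mul_sub_nonneg_iff hF_nonneg ((hFx k).trans hk),
    sum_mul_nonpos_iff_of_nonneg hF_nonneg hx_nonneg]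
  simp only [hFx, regret_nonpos_iff]
  exact forall_congr' fun _ => forall_comm

/-- A point of the simplex is an inertial Nash equilibrium iff it solves VI(S, F). -/
theorem inertial_iff_VI (n : ℕ) (hn : 0 < n)
    (u : Fin n → (Fin n → ℝ) → ℝ) (hu : ∀ i, Continuous (u i))
    (c : Fin n → Fin n → ℝ) (hc : ∀ i j, 0 ≤ c i j) (hcd : ∀ i, c i i = 0)
    (F : Fin n → (Fin n → ℝ) → ℝ)
    (hF : ∀ i x, F i x = (Finset.univ.sup' ⟨⟨0, hn⟩, Finset.mem_univ _⟩
        fun j => u j x - u i x - c i j))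
    (x : Fin n → ℝ) (hx_nonneg : ∀ i, 0 ≤ x i) (hx_sum : ∑ i, x i = 1) :
    (∀ i j, 0 < x i → u j x - c i j ≤ u i x) ↔
      (∀ y : Fin n → ℝ, (∀ i, 0 ≤ y i) → (∑ i, y i = 1) →
        0 ≤ ∑ i, F i x * (y i - x i)) :=
  inertial_iff_VI_general n hn u c hc hcd F hF x hx_nonneg
end

section
/- The operator F arising from the inertial equilibrium VI can fail to be monotone: for n = 3 with utilities u_1(x) = 1.2 - x_1, u_2(x) = 1.2 - x_2, u_3(x) = 1 - x_3 and switching costs C = [[0, 0.2, 0.3], [1, 0, 0.8], [0.1, 1.2, 0]], the symmetrized Jacobian of F at the point x = (0.2, 0.2, 0.6) equals the matrix [[0,0,-1],[0,0,0],[-1,0,2]], which is indefinite (it has both a positive and a negative eigenvalue). -/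
/-!
At `x₀` each maximum defining `F i` is attained at a unique index `j`, so near `x₀` the
function `F i` agrees with the affine map `x ↦ x i - x j + const` and has derivative
`e i - e j`. The maximizers are `0, 1, 0`, so only `F 2` has a nonzero derivative, which
gives `M`; `M` is indefinite because `M 2 2 = 2 > 0` while the quadratic form is `-2` at
`(2, 0, 1)`.
-/

open Filter Topology Finset

theorem Finset.sup'_univ_eventuallyEq_of_forall_lt {ι X α : Type*} [Fintype ι]
    [TopologicalSpace X] [LinearOrder α] [TopologicalSpace α] [OrderClosedTopology α]
    {f : ι → X → α} {x₀ : X} {j₀ : ι} (hf : ∀ j, ContinuousAt (f j) x₀)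
    (hmax : ∀ j ≠ j₀, f j x₀ < f j₀ x₀) (hne : (univ : Finset ι).Nonempty) :
    (fun x => univ.sup' hne (f · x)) =ᶠ[𝓝 x₀] f j₀ := by
  have hle : ∀ᶠ x in 𝓝 x₀, ∀ j, f j x ≤ f j₀ x := by
    refine eventually_all.2 fun j => ?_
    by_cases hj : j = j₀
    · exact Eventually.of_forall fun x => hj ▸ le_rfl
    · exact ((hf j).eventually_lt (hf j₀) (hmax j hj)).mono fun _ => le_of_lt
  filter_upwards [hle] with x hx
  exact le_antisymm (sup'_le _ _ fun j _ => hx j) (le_sup' (f · x) (mem_univ j₀))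

theorem hasFDerivAt_finset_sup'_univ_of_forall_lt {ι E : Type*} [Fintype ι]
    [NormedAddCommGroup E] [NormedSpace ℝ E] {f : ι → E → ℝ} {f' : ι → E →L[ℝ] ℝ} {x₀ : E}
    {j₀ : ι} (hf : ∀ j, HasFDerivAt (f j) (f' j) x₀) (hmax : ∀ j ≠ j₀, f j x₀ < f j₀ x₀)
    (hne : (univ : Finset ι).Nonempty) :
    HasFDerivAt (fun x => univ.sup' hne (f · x)) (f' j₀) x₀ :=
  (hf j₀).congr_of_eventuallyEq
    (sup'_univ_eventuallyEq_of_forall_lt (fun j => (hf j).continuousAt) hmax hne)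

theorem hasFDerivAt_sub_apply_sub_sub_apply_sub {ι : Type*} [Fintype ι] (b : ι → ℝ) (c : ℝ)
    (i j : ι) (x₀ : ι → ℝ) :
    HasFDerivAt (fun x : ι → ℝ => (b j - x j) - (b i - x i) - c)
      ((ContinuousLinearMap.proj i : (ι → ℝ) →L[ℝ] ℝ) - ContinuousLinearMap.proj j) x₀ := by
  have h := (((hasFDerivAt_const (b j) x₀).sub (hasFDerivAt_apply (𝕜 := ℝ) j x₀)).sub
    ((hasFDerivAt_const (b i) x₀).sub (hasFDerivAt_apply (𝕜 := ℝ) i x₀))).sub_const c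
  exact h.congr_fderiv (by ext; simp; ring)

/-- In Example 1, the symmetrized Jacobian of the VI operator F at the point
(0.2, 0.2, 0.6) equals [[0,0,-1],[0,0,0],[-1,0,2]], which is indefinite. -/
theorem example1_F_not_monotone_jacobian :
    let u : Fin 3 → (Fin 3 → ℝ) → ℝ :=
      ![fun x => 1.2 - x 0, fun x => 1.2 - x 1, fun x => 1 - x 2]
    let c : Fin 3 → Fin 3 → ℝ := !![0, 0.2, 0.3; 1, 0, 0.8; 0.1, 1.2, 0]
    let F : Fin 3 → (Fin 3 → ℝ) → ℝ := fun i x =>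
      Finset.univ.sup' ⟨0, Finset.mem_univ _⟩ fun j => u j x - u i x - c i j
    let x₀ : Fin 3 → ℝ := ![0.2, 0.2, 0.6]
    let M : Matrix (Fin 3) (Fin 3) ℝ := !![0, 0, -1; 0, 0, 0; -1, 0, 2]
    (∀ i, DifferentiableAt ℝ (F i) x₀) ∧
    (∀ i j, M i j =
        fderiv ℝ (F j) x₀ (Pi.single i 1) + fderiv ℝ (F i) x₀ (Pi.single j 1)) ∧
    (∃ v : Fin 3 → ℝ, 0 < dotProduct v (M.mulVec v)) ∧
    (∃ w : Fin 3 → ℝ, dotProduct w (M.mulVec w) < 0) := by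
  intro u c F x₀ M
  have hu : u = fun j x => ![1.2, 1.2, 1] j - x j := by
    funext j x; fin_cases j <;> rfl
  let jmax : Fin 3 → Fin 3 := ![0, 1, 0]
  have hmax : ∀ i, ∀ j ≠ jmax i,
      u j x₀ - u i x₀ - c i j < u (jmax i) x₀ - u i x₀ - c i (jmax i) := by
    intro i j hj
    fin_cases i <;> fin_cases j <;> simp_all [u, c, x₀, jmax] <;> norm_num
  have hF : ∀ i, HasFDerivAt (F i)
      ((ContinuousLinearMap.proj i : (Fin 3 → ℝ) →L[ℝ] ℝ) - ContinuousLinearMap.proj (jmax i))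
      x₀ := fun i =>
    hasFDerivAt_finset_sup'_univ_of_forall_lt (f := fun j x => u j x - u i x - c i j)
      (fun j => by rw [hu]; exact hasFDerivAt_sub_apply_sub_sub_apply_sub _ (c i j) i j x₀)
      (hmax i) _
  refine ⟨fun i => (hF i).differentiableAt, fun i j => ?_, ⟨![0, 0, 1], ?_⟩, ⟨![2, 0, 1], ?_⟩⟩
  · simp only [(hF _).fderiv]
    fin_cases i <;> fin_cases j <;> norm_num [M, jmax]
  all_goals simp [M, dotProduct, Matrix.mulVec, Fin.sum_univ_three]
end

section
/- Non-convergence counterexample for the better-response dynamics when condition (bound_upper) is violated: with n = 2, u_1(x_1) = 1 - x_1, u_2(x_2) = 1 - x_2, c_{12} = c_{21} = 1/2, initial state x(0) = (3/4 + d/2, 1/4 - d/2) for small d > 0, and a repeated transfer of mass 1/2 + d from the worse-off to the better-off action, the sequence satisfies x(2k) = x(0) and x(2k+1) = (1/4 - d/2, 3/4 + d/2) for all k, and neither x(0) nor x(1) is an inertial equilibrium. -/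
/-!
With utilities `u i x = 1 - x i` and cost `1/2`, an action carrying mass `x i > 0` is
inertially stable only if `x i - x j ≤ 1/2`. The two states differ in the gap
`(3/4 + d/2) - (1/4 - d/2) = 1/2 + d > 1/2`, so the heavier action violates inertia in
both; moving `1/2 + d` from it to the other action swaps the two states, hence the
dynamics alternates between them forever.
-/

theorem not_inertial_of_lt_sub {ι : Type*} {x : ι → ℝ} {c : ℝ} {i j : ι} (hij : i ≠ j)
    (hi : 0 < x i) (hgap : c < x i - x j) :
    ¬ ∀ i j, i ≠ j → 0 < x i → (1 - x j) - c ≤ 1 - x i :=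
  fun h => by linarith [h i j hij hi]

theorem better_response_nonconvergence_general (d : ℝ) (hd : 0 < d) :
    let u : Fin 2 → (Fin 2 → ℝ) → ℝ := fun i x => 1 - x i
    let IE : (Fin 2 → ℝ) → Prop := fun x =>
      (∀ i, 0 ≤ x i) ∧ (∑ i, x i = 1) ∧
        ∀ i j, i ≠ j → 0 < x i → u j x - 1 / 2 ≤ u i x
    let x0 : Fin 2 → ℝ := ![3 / 4 + d / 2, 1 / 4 - d / 2]
    let x1 : Fin 2 → ℝ := ![1 / 4 - d / 2, 3 / 4 + d / 2]
    let X : ℕ → (Fin 2 → ℝ) := fun k => if Even k then x0 else x1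
    (x1 0 = x0 0 - (1 / 2 + d) ∧ x1 1 = x0 1 + (1 / 2 + d)) ∧
    ¬ IE x0 ∧ ¬ IE x1 ∧
    (∀ k, X (2 * k) = x0 ∧ X (2 * k + 1) = x1) := by
  intro u IE x0 x1 X
  have hheavy : 0 < 3 / 4 + d / 2 := by positivity
  have hgap : (1 / 2 : ℝ) < (3 / 4 + d / 2) - (1 / 4 - d / 2) := by linarith
  refine ⟨⟨by simp [x0, x1]; ring, by simp [x0, x1]; ring⟩, ?_, ?_, fun k => by simp [X]⟩
  · exact fun ⟨_, _, h⟩ =>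
      not_inertial_of_lt_sub (x := x0) (i := 0) (j := 1) (by decide) hheavy hgap h
  · exact fun ⟨_, _, h⟩ =>
      not_inertial_of_lt_sub (x := x1) (i := 1) (j := 0) (by decide) hheavy hgap h

/-- Non-convergence counterexample for the better-response dynamics when the
upper bound condition is violated: the dynamics is 2-periodic and never reaches
an inertial equilibrium. -/
theorem better_response_nonconvergence (d : ℝ) (hd : 0 < d) (hd' : d < 1 / 2) :
    let u : Fin 2 → (Fin 2 → ℝ) → ℝ := fun i x => 1 - x i
    let IE : (Fin 2 → ℝ) → Prop := fun x =>
      (∀ i, 0 ≤ x i) ∧ (∑ i, x i = 1) ∧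
        ∀ i j, i ≠ j → 0 < x i → u j x - 1 / 2 ≤ u i x
    let x0 : Fin 2 → ℝ := ![3 / 4 + d / 2, 1 / 4 - d / 2]
    let x1 : Fin 2 → ℝ := ![1 / 4 - d / 2, 3 / 4 + d / 2]
    let X : ℕ → (Fin 2 → ℝ) := fun k => if Even k then x0 else x1
    (x1 0 = x0 0 - (1 / 2 + d) ∧ x1 1 = x0 1 + (1 / 2 + d)) ∧
    ¬ IE x0 ∧ ¬ IE x1 ∧
    (∀ k, X (2 * k) = x0 ∧ X (2 * k + 1) = x1) :=
  better_response_nonconvergence_general d hd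
end
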